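/- Let G be a finite connected graph and C ⊆ V(G) a monophonically convex set. Let u, v ∈ V(G) \ C be distinct non-adjacent vertices. Then cl({u,v}) ∩ C ≠ ∅ if and only if there exist u', v' ∈ N(C) with u'v' ∉ E(G) and u', v' ∈ cl({u,v}). -/

import Mathlib

/-
(→) As `u, v ∉ C`, the set `cl({u,v}) \ C` contains `u` and `v` but not the whole hull, so it is
not convex: some induced path between two of its vertices enters `C`. On that path the vertex just
before its first visit to `C` and the one just after its last visit are neighbours of `C`, at
distance at least two along the path, hence non-adjacent because the path is induced.
(←) Join a neighbour `c ∈ C` of `u'` to a neighbour `c' ∈ C` of `v'` by an induced path, which stays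
in `C` by convexity. An induced `u'`–`v'` path inside `u' c … c' v'` has length at least two since
`u' ≁ v'`, so its interior vertices lie in `C`, and they lie in `cl({u,v})` with `u'` and `v'`.
-/

open Classical

variable {V : Type*}

namespace Paper

def mInterval (G : SimpleGraph V) (u v : V) : Set V :=
  {w | ∃ p : G.Walk u v, p.IsPath ∧ p.toSubgraph.IsInduced ∧ w ∈ p.support}

def MConvex (G : SimpleGraph V) (C : Set V) : Prop :=
  ∀ u ∈ C, ∀ v ∈ C, mInterval G u v ⊆ C

def mHull (G : SimpleGraph V) (X : Set V) : Set V :=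
  ⋂₀ {C | MConvex G C ∧ X ⊆ C}

def mIntervalSet (G : SimpleGraph V) (Z : Set V) : Set V :=
  ⋃ u ∈ Z, ⋃ v ∈ Z, mInterval G u v

def Sep (G : SimpleGraph V) (A B : Set V) : Prop :=
  ∃ H : Set V, MConvex G H ∧ MConvex G Hᶜ ∧ A ⊆ H ∧ B ⊆ Hᶜ

def nbhd (G : SimpleGraph V) (X : Set V) : Set V :=
  {v | v ∉ X ∧ ∃ x ∈ X, G.Adj x v}

def cnbhd (G : SimpleGraph V) (X : Set V) : Set V := X ∪ nbhd G X

def front (G : SimpleGraph V) (X Y : Set V) : Set V := X ∩ cnbhd G Y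

def IsClique (G : SimpleGraph V) (K : Set V) : Prop :=
  ∀ u ∈ K, ∀ v ∈ K, u ≠ v → G.Adj u v

def shadow (G : SimpleGraph V) (A B : Set V) : Set V :=
  {v | (mHull G (B ∪ {v}) ∩ A).Nonempty}

def Forbidden (G : SimpleGraph V) (A B X : Set V) : Prop :=
  X ⊆ (A ∪ B)ᶜ ∧ (mHull G X ∩ A).Nonempty ∧ (mHull G X ∩ B).Nonempty

def MFS (G : SimpleGraph V) (A B : Set V) : Set (Set V) :=
  {X | Forbidden G A B X ∧ ∀ Y, Y ⊂ X → ¬ Forbidden G A B Y}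

def presat (G : SimpleGraph V) (A B : Set V) : Set V :=
  mHull G (shadow G A B ∪ ⋃ X ∈ MFS G A B, ⋂ x ∈ X, mHull G (A ∪ {x}))

def Linked (G : SimpleGraph V) (A B : Set V) : Prop :=
  ∃ a ∈ A, ∃ b ∈ B, G.Adj a b

def Saturated (G : SimpleGraph V) (A B : Set V) : Prop :=
  A = presat G A B ∧ B = presat G B A

def IsCompOf (G : SimpleGraph V) (W S : Set V) : Prop :=
  S.Nonempty ∧ S ⊆ W ∧ (G.induce S).Connected ∧
    ∀ T, S ⊆ T → T ⊆ W → (G.induce T).Connected → T = S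

def Eqv (G : SimpleGraph V) (A B : Set V) (u v : V) : Prop :=
  u = v ∨ ∃ L : List (Set V), L ≠ [] ∧
    (∀ S ∈ L, IsCompOf G (cnbhd G (A ∪ B))ᶜ S) ∧
    List.Chain' (fun S T => (nbhd G S ∩ nbhd G T).Nonempty) L ∧
    (∃ S₀ ∈ L.head?, u ∈ cnbhd G S₀) ∧
    (∃ Sₖ ∈ L.getLast?, v ∈ cnbhd G Sₖ)

end Paper

open Paper

namespace SimpleGraph.Walk

variable {G : SimpleGraph V} {u v : V}

theorem not_adj_getVert_of_isChordless {p : G.Walk u v} (hp : p.IsPath) (hc : p.IsChordless)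
    {i j : ℕ} (hij : i + 1 < j) (hj : j ≤ p.length) : ¬ G.Adj (p.getVert i) (p.getVert j) := by
  intro hadj
  obtain ⟨k, hk, hkij⟩ := (mk_mem_edges_iff_exists p).1 <|
    hc.mem_edges (p.getVert_mem_support i) (p.getVert_mem_support j) hadj
  have hinj {a b : ℕ} (ha : a ≤ p.length) (hb : b ≤ p.length) (h : p.getVert a = p.getVert b) :
      a = b :=
    hp.getVert_injOn ha hb h
  rcases Sym2.eq_iff.1 hkij with ⟨h₁, h₂⟩ | ⟨h₁, h₂⟩ <;>
  · have := hinj (by omega) (by omega) h₁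
    have := hinj (by omega) (by omega) h₂
    omega

theorem isChordless_of_forall_length_le {S : Set V} {p : G.Walk u v}
    (hpS : ∀ x ∈ p.support, x ∈ S)
    (hmin : ∀ q : G.Walk u v, (∀ x ∈ q.support, x ∈ S) → p.length ≤ q.length) :
    p.IsChordless := by
  rw [isChordless_iff_forall_mem_edges]
  suffices h : ∀ i j, i < j → j ≤ p.length → G.Adj (p.getVert i) (p.getVert j) →
      s(p.getVert i, p.getVert j) ∈ p.edges by
    intro x y hx hy hxy
    obtain ⟨i, rfl, hi⟩ := mem_support_iff_exists_getVert.1 hx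
    obtain ⟨j, rfl, hj⟩ := mem_support_iff_exists_getVert.1 hy
    rcases lt_trichotomy i j with hij | rfl | hij
    · exact h i j hij hj hxy
    · exact (G.irrefl hxy).elim
    · rw [Sym2.eq_swap]
      exact h j i hij hi hxy.symm
  intro i j hij hj hadj
  by_cases hsucc : j = i + 1
  · subst hsucc
    exact (mk_mem_edges_iff_exists p).2 ⟨i, by omega, rfl⟩
  -- a chord between non-consecutive vertices would shortcut `p` inside `S`
  let q : G.Walk u v := (p.take i).append (cons hadj (p.drop j))
  have hqS : ∀ x ∈ q.support, x ∈ S := by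
    intro x hx
    simp only [q, support_append, support_cons, List.tail_cons, List.mem_append, support_take,
      drop_support_eq_support_drop_min] at hx
    exact hpS x (hx.elim List.mem_of_mem_take List.mem_of_mem_drop)
  have := hmin q hqS
  simp only [q, length_append, length_cons, take_length, drop_length] at this
  omega

theorem exists_isPath_isChordless_support_subset (p : G.Walk u v) :
    ∃ q : G.Walk u v, q.IsPath ∧ q.IsChordless ∧ ∀ x ∈ q.support, x ∈ p.support := by
  obtain ⟨q, hq, hqmin⟩ := (measure fun q : G.Walk u v => q.length).wf.has_min
    {q | ∀ x ∈ q.support, x ∈ p.support} ⟨p, fun _ => id⟩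
  have hbypass : ∀ x ∈ q.bypass.support, x ∈ p.support :=
    fun x hx => hq x (q.support_bypass_subset_support hx)
  refine ⟨q.bypass, q.bypass_isPath, isChordless_of_forall_length_le hbypass ?_, hbypass⟩
  exact fun r hr => q.length_bypass_le_length.trans (not_lt.1 (hqmin r hr))

end SimpleGraph.Walk

namespace Paper

open SimpleGraph Walk

variable {G : SimpleGraph V}

theorem subset_mHull (X : Set V) : X ⊆ mHull G X :=
  fun _ hx => Set.mem_sInter.2 fun _ hD => hD.2 hx

theorem mHull_subset {X C : Set V} (hC : MConvex G C) (hXC : X ⊆ C) : mHull G X ⊆ C :=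
  Set.sInter_subset_of_mem ⟨hC, hXC⟩

theorem mConvex_mHull (X : Set V) : MConvex G (mHull G X) := fun _ ha _ hb _ hw =>
  Set.mem_sInter.2 fun D hD => hD.1 _ (Set.mem_sInter.1 ha D hD) _ (Set.mem_sInter.1 hb D hD) hw

theorem mem_mInterval_of_isChordless {a b w : V} {p : G.Walk a b} (hp : p.IsPath)
    (hc : p.IsChordless) (hw : w ∈ p.support) : w ∈ mInterval G a b :=
  ⟨p, hp, isInduced_toSubgraph.2 hc, hw⟩

theorem exists_mInterval_meets_of_mHull_meets {X C : Set V} (hXC : Disjoint X C)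
    (h : (mHull G X ∩ C).Nonempty) :
    ∃ a ∈ mHull G X, ∃ b ∈ mHull G X, a ∉ C ∧ b ∉ C ∧ (mInterval G a b ∩ C).Nonempty := by
  by_contra! hcon
  have hconv : MConvex G (mHull G X \ C) := fun a ha b hb w hw =>
    ⟨mConvex_mHull X a ha.1 b hb.1 hw,
      fun hwC => Set.notMem_empty w ((hcon a ha.1 b hb.1 ha.2 hb.2).subset ⟨hw, hwC⟩)⟩
  obtain ⟨w, hw, hwC⟩ := h
  exact (mHull_subset hconv (fun x hx => ⟨subset_mHull X hx, hXC.notMem_of_mem_left hx⟩) hw).2 hwC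

theorem exists_mem_nbhd_of_isChordless {C : Set V} {a b : V} {p : G.Walk a b} (hp : p.IsPath)
    (hc : p.IsChordless) (ha : a ∉ C) (hb : b ∉ C) (hpC : ∃ x ∈ p.support, x ∈ C) :
    ∃ u' ∈ p.support, ∃ v' ∈ p.support, u' ∈ nbhd G C ∧ v' ∈ nbhd G C ∧ u' ≠ v' ∧
      ¬ G.Adj u' v' := by
  have hex : ∃ i, p.getVert i ∈ C := by
    obtain ⟨x, hx, hxC⟩ := hpC
    obtain ⟨i, rfl, -⟩ := mem_support_iff_exists_getVert.1 hx
    exact ⟨i, hxC⟩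
  set i := Nat.find hex
  have hiC : p.getVert i ∈ C := Nat.find_spec hex
  have hi : i ≤ p.length := by
    by_contra! h
    exact hb (p.getVert_of_length_le h.le ▸ hiC)
  have hi0 : i ≠ 0 := fun h => ha (p.getVert_zero ▸ h ▸ hiC)
  set j := Nat.findGreatest (fun k => p.getVert k ∈ C) p.length
  have hjC : p.getVert j ∈ C := Nat.findGreatest_spec (P := fun k => p.getVert k ∈ C) hi hiC
  have hij : i ≤ j := Nat.le_findGreatest hi hiC
  have hj : j < p.length := by
    refine (Nat.findGreatest_le _).lt_of_ne fun h => hb ?_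
    rw [← p.getVert_length, ← h]
    exact hjC
  have hbefore : p.getVert (i - 1) ∉ C := Nat.find_min hex (by omega)
  have hafter : p.getVert (j + 1) ∉ C := Nat.findGreatest_is_greatest (lt_add_one j) hj
  have hne : p.getVert (i - 1) ≠ p.getVert (j + 1) := fun h => by
    have := hp.getVert_injOn (show i - 1 ≤ p.length by omega) (show j + 1 ≤ p.length by omega) h
    omega
  refine ⟨_, p.getVert_mem_support (i - 1), _, p.getVert_mem_support (j + 1),
    ⟨hbefore, _, hiC, ?_⟩, ⟨hafter, _, hjC, p.adj_getVert_succ hj⟩, hne,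
    not_adj_getVert_of_isChordless hp hc (by omega) (by omega)⟩
  simpa [Nat.sub_add_cancel (Nat.one_le_iff_ne_zero.2 hi0)] using
    (p.adj_getVert_succ (i := i - 1) (by omega)).symm

theorem mInterval_inter_nonempty_of_mem_nbhd (hG : G.Preconnected) {C : Set V}
    (hC : MConvex G C) {u' v' : V} (hu' : u' ∈ nbhd G C) (hv' : v' ∈ nbhd G C) (hne : u' ≠ v')
    (hnadj : ¬ G.Adj u' v') : (mInterval G u' v' ∩ C).Nonempty := by
  obtain ⟨-, c, hc, hcu'⟩ := hu'
  obtain ⟨-, c', hc', hc'v'⟩ := hv'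
  obtain ⟨q, hq, hqc, -⟩ := exists_isPath_isChordless_support_subset (hG c c').some
  have hqC : ∀ x ∈ q.support, x ∈ C :=
    fun x hx => hC c hc c' hc' (mem_mInterval_of_isChordless hq hqc hx)
  obtain ⟨r, hr, hrc, hrW⟩ :=
    exists_isPath_isChordless_support_subset ((cons hcu'.symm q).concat hc'v')
  have hlen : 1 < r.length := by
    rcases Nat.lt_trichotomy r.length 1 with h | h | h
    · exact absurd (r.eq_of_length_eq_zero (by omega)) hne
    · exact absurd (adj_of_length_eq_one h) hnadj
    · exact h
  have hsnd_ne_u' : r.snd ≠ u' := by rw [Ne, hr.getVert_eq_start_iff (by omega)]; omega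
  have hsnd_ne_v' : r.snd ≠ v' := by rw [Ne, hr.getVert_eq_end_iff (by omega)]; omega
  have hsndC : r.snd ∈ C := by
    have := hrW _ (r.getVert_mem_support 1)
    simp only [support_concat, support_cons, List.cons_append, List.mem_cons,
      List.mem_append] at this
    exact hqC _ (by tauto)
  exact ⟨r.snd, mem_mInterval_of_isChordless hr hrc (r.getVert_mem_support 1), hsndC⟩

end Paper

open Paper

theorem stmt_8_general (G : SimpleGraph V) (hG : G.Connected)
    (C : Set V) (hC : MConvex G C) (u v : V) (hu : u ∉ C) (hv : v ∉ C) :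
    (mHull G {u, v} ∩ C).Nonempty ↔
      ∃ u' ∈ nbhd G C, ∃ v' ∈ nbhd G C, u' ≠ v' ∧ ¬ G.Adj u' v' ∧
        u' ∈ mHull G {u, v} ∧ v' ∈ mHull G {u, v} := by
  constructor
  · intro h
    obtain ⟨a, ha, b, hb, haC, hbC, w, ⟨p, hp, hind, hw⟩, hwC⟩ :=
      exists_mInterval_meets_of_mHull_meets (by simp [Set.disjoint_left, hu, hv]) h
    have hc := SimpleGraph.Walk.isInduced_toSubgraph.1 hind
    obtain ⟨u', hu'p, v', hv'p, hu', hv', hne, hnadj⟩ :=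
      exists_mem_nbhd_of_isChordless hp hc haC hbC ⟨w, hw, hwC⟩
    exact ⟨u', hu', v', hv', hne, hnadj,
      mConvex_mHull _ a ha b hb (mem_mInterval_of_isChordless hp hc hu'p),
      mConvex_mHull _ a ha b hb (mem_mInterval_of_isChordless hp hc hv'p)⟩
  · rintro ⟨u', hu', v', hv', hne, hnadj, hu'H, hv'H⟩
    obtain ⟨w, hw, hwC⟩ := mInterval_inter_nonempty_of_mem_nbhd hG.preconnected hC hu' hv' hne hnadj
    exact ⟨w, mConvex_mHull _ u' hu'H v' hv'H hw, hwC⟩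

theorem stmt_8 [Fintype V] (G : SimpleGraph V) (hG : G.Connected)
    (C : Set V) (hC : MConvex G C) (u v : V) (hu : u ∉ C) (hv : v ∉ C)
    (huv : u ≠ v) (hnadj : ¬ G.Adj u v) :
    (mHull G {u, v} ∩ C).Nonempty ↔
      ∃ u' ∈ nbhd G C, ∃ v' ∈ nbhd G C, u' ≠ v' ∧ ¬ G.Adj u' v' ∧
        u' ∈ mHull G {u, v} ∧ v' ∈ mHull G {u, v} :=
  stmt_8_general G hG C hC u v hu hv
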